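/- arXiv:2508.10410 — 5 statements merged into one kernel-verified Lean document; each statement's English description precedes it below -/
import Mathlib

section
/- The polynomial sequence a(n) satisfies the second-order linear recurrence a(n+2) = (x+2)²·a(n+1) − (x+1)³·a(n) for all n ≥ 1. -/
open Polynomial

/-- The pair `(a n, b n)` of bracket polynomials of the Celtic knot shadow. -/
noncomputable def ab : ℕ → Polynomial ℤ × Polynomial ℤ
  | 0 => (0, 0)
  | 1 => (X ^ 2 + X, X)
  | n + 2 =>
      ((X ^ 2 + 3 * X + 3) * (ab (n + 1)).1 + (X + 1) * (ab (n + 1)).2,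
       (X + 2) * (ab (n + 1)).1 + (X + 1) * (ab (n + 1)).2)

/-- `a n = ⟨CK₄^{2n}⟩`, the Kauffman bracket of the Celtic knot shadow. -/
noncomputable def a (n : ℕ) : Polynomial ℤ := (ab n).1

/-- `b n = ⟨V₂^{2n-1} CK₄^{2n}⟩`. -/
noncomputable def b (n : ℕ) : Polynomial ℤ := (ab n).2

theorem celtic_second_order_recurrence :
    ∀ n : ℕ, 1 ≤ n →
      a (n + 2) = (X + 2) ^ 2 * a (n + 1) - (X + 1) ^ 3 * a n := by
  rintro (_ | m) h
  · exact absurd h (by norm_num)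
  · show a (m + 3) = (X + 2) ^ 2 * a (m + 2) - (X + 1) ^ 3 * a (m + 1)
    have h3 : a (m + 3) = (X ^ 2 + 3 * X + 3) * a (m + 2) + (X + 1) * b (m + 2) := rfl
    have h2a : a (m + 2) = (X ^ 2 + 3 * X + 3) * a (m + 1) + (X + 1) * b (m + 1) := rfl
    have h2b : b (m + 2) = (X + 2) * a (m + 1) + (X + 1) * b (m + 1) := rfl
    rw [h3, h2a, h2b]
    ring
end

section
/- Let c(n) = (coefficient of x¹ in a(n)). Then c(1) = 1, c(2) = 4, and c(n+2) = 4·c(n+1) − c(n) for all n ≥ 1 (so c(n) is OEIS sequence A001353). -/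
open Polynomial

/-- `c n` is the number of single-circle Kauffman states of `CK₄^{2n}`. -/
noncomputable def c (n : ℕ) : ℤ := (a n).coeff 1

lemma a_succ (n : ℕ) : a (n + 2) = (X ^ 2 + 3 * X + 3) * a (n + 1) + (X + 1) * b (n + 1) := by
  simp [a, b, ab]

lemma b_succ (n : ℕ) : b (n + 2) = (X + 2) * a (n + 1) + (X + 1) * b (n + 1) := by
  simp [a, b, ab]

lemma cA1 (p q : Polynomial ℤ) :
    ((X ^ 2 + 3 * X + 3) * p + (X + 1) * q).coeff 1
      = 3 * p.coeff 0 + 3 * p.coeff 1 + q.coeff 0 + q.coeff 1 := by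
  have h : (X ^ 2 + 3 * X + 3) * p + (X + 1) * q
      = p * X ^ 2 + 3 * (X * p) + 3 * p + (X * q + q) := by ring
  rw [h]; simp [coeff_X_mul, coeff_mul_X_pow']; ring

lemma cA0 (p q : Polynomial ℤ) :
    ((X ^ 2 + 3 * X + 3) * p + (X + 1) * q).coeff 0 = 3 * p.coeff 0 + q.coeff 0 := by
  have h : (X ^ 2 + 3 * X + 3) * p + (X + 1) * q
      = p * X ^ 2 + 3 * (X * p) + 3 * p + (X * q + q) := by ring
  rw [h]; simp [coeff_X_mul, coeff_mul_X_pow']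

lemma cB1 (p q : Polynomial ℤ) :
    ((X + 2) * p + (X + 1) * q).coeff 1
      = p.coeff 0 + 2 * p.coeff 1 + q.coeff 0 + q.coeff 1 := by
  have h : (X + 2) * p + (X + 1) * q = X * p + 2 * p + (X * q + q) := by ring
  rw [h]; simp [coeff_X_mul]; ring

lemma cB0 (p q : Polynomial ℤ) :
    ((X + 2) * p + (X + 1) * q).coeff 0 = 2 * p.coeff 0 + q.coeff 0 := by
  have h : (X + 2) * p + (X + 1) * q = X * p + 2 * p + (X * q + q) := by ring
  rw [h]; simp [coeff_X_mul]

lemma coeff0 : ∀ n : ℕ, 1 ≤ n → (a n).coeff 0 = 0 ∧ (b n).coeff 0 = 0 := by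
  intro n hn
  induction n with
  | zero => omega
  | succ m ih =>
    match m, ih with
    | 0, _ => constructor <;> simp [a, b, ab]
    | m + 1, ih =>
      obtain ⟨ha, hb⟩ := ih (by omega)
      rw [a_succ, b_succ, cA0, cB0, ha, hb]
      simp

lemma step (n : ℕ) (hn : 1 ≤ n) :
    c (n + 1) = 3 * c n + (b n).coeff 1 ∧
    (b (n + 1)).coeff 1 = 2 * c n + (b n).coeff 1 := by
  obtain ⟨m, rfl⟩ := Nat.exists_eq_add_of_le hn
  obtain ⟨ha, hb⟩ := coeff0 (1 + m) hn
  have e1 : 1 + m + 1 = m + 2 := by ring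
  have e2 : 1 + m = m + 1 := by ring
  rw [e1, e2, c, c, a_succ, b_succ, cA1, cB1]
  rw [show a (m + 1) = a (m + 1) from rfl]
  rw [e2] at ha hb
  rw [ha, hb]
  constructor <;> ring

theorem celtic_A001353 :
    c 1 = 1 ∧ c 2 = 4 ∧ ∀ n : ℕ, 1 ≤ n → c (n + 2) = 4 * c (n + 1) - c n := by
  refine ⟨by simp [c, a, ab], ?_, ?_⟩
  · have h := step 1 le_rfl
    have hc1 : c 1 = 1 := by simp [c, a, ab]
    have hb1 : (b 1).coeff 1 = 1 := by simp [b, ab]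
    rw [hc1, hb1] at h
    simpa using h.1
  · intro n hn
    obtain ⟨h1, h2⟩ := step n hn
    obtain ⟨h3, _⟩ := step (n + 1) (by omega)
    rw [h3, h1, h2]
    ring
end

section
/- For every real x with x⁴ + 4x³ + 12x² + 20x + 12 > 0, setting p = x² + 4x + 4 and q = √(x⁴ + 4x³ + 12x² + 20x + 12), one has for all n ≥ 1: a(n)(x) = (1/(2q))·(x² + x)·((x² + 2x + 4 + q)·((p+q)/2)^{n−1} − (x² + 2x + 4 − q)·((p−q)/2)^{n−1}). -/
open Polynomial

lemma celtic_key (x q L M : ℝ)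
    (hq2 : q ^ 2 = x ^ 4 + 4 * x ^ 3 + 12 * x ^ 2 + 20 * x + 12)
    (hL : L = (x ^ 2 + 4 * x + 4 + q) / 2) (hM : M = (x ^ 2 + 4 * x + 4 - q) / 2) :
    ∀ n : ℕ,
      2 * q * Polynomial.aeval x (a (n + 1)) =
        (x ^ 2 + x) * (x ^ 2 + 2 * x + 4 + q) * L ^ n
          - (x ^ 2 + x) * (x ^ 2 + 2 * x + 4 - q) * M ^ n ∧
      2 * q * Polynomial.aeval x (b (n + 1)) =
        (x ^ 3 + 4 * x ^ 2 + 2 * x + x * q) * L ^ n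
          - (x ^ 3 + 4 * x ^ 2 + 2 * x - x * q) * M ^ n := by
  intro n
  induction n with
  | zero =>
      constructor
      · show 2 * q * Polynomial.aeval x (ab 1).1 = _
        simp only [ab, map_add, map_mul, map_pow, aeval_X, pow_zero]
        ring
      · show 2 * q * Polynomial.aeval x (ab 1).2 = _
        simp only [ab, aeval_X, pow_zero]
        ring
  | succ m ih =>
      obtain ⟨ihA, ihB⟩ := ih
      have hA : Polynomial.aeval x (a (m + 2)) =
          (x ^ 2 + 3 * x + 3) * Polynomial.aeval x (a (m + 1))
            + (x + 1) * Polynomial.aeval x (b (m + 1)) := by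
        show Polynomial.aeval x (ab (m + 2)).1 = _
        simp only [ab, a, b, map_add, map_mul, map_pow, aeval_X, map_ofNat]
        norm_num
      have hB : Polynomial.aeval x (b (m + 2)) =
          (x + 2) * Polynomial.aeval x (a (m + 1))
            + (x + 1) * Polynomial.aeval x (b (m + 1)) := by
        show Polynomial.aeval x (ab (m + 2)).2 = _
        simp only [ab, a, b, map_add, map_mul, map_pow, aeval_X, map_ofNat]
        norm_num
      constructor
      · rw [hA, pow_succ, pow_succ]
        linear_combination (x ^ 2 + 3 * x + 3) * ihA + (x + 1) * ihB
          - (x ^ 2 + x) * (x ^ 2 + 2 * x + 4 + q) * L ^ m * hL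
          + (x ^ 2 + x) * (x ^ 2 + 2 * x + 4 - q) * M ^ m * hM
          + (-(x ^ 2 + x) / 2) * (L ^ m - M ^ m) * hq2
      · rw [hB, pow_succ, pow_succ]
        linear_combination (x + 2) * ihA + (x + 1) * ihB
          - (x ^ 3 + 4 * x ^ 2 + 2 * x + x * q) * L ^ m * hL
          + (x ^ 3 + 4 * x ^ 2 + 2 * x - x * q) * M ^ m * hM
          + (-x / 2) * (L ^ m - M ^ m) * hq2

theorem celtic_closed_form_a :
    ∀ x : ℝ, 0 < x ^ 4 + 4 * x ^ 3 + 12 * x ^ 2 + 20 * x + 12 →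
      ∀ p q : ℝ, p = x ^ 2 + 4 * x + 4 →
        q = Real.sqrt (x ^ 4 + 4 * x ^ 3 + 12 * x ^ 2 + 20 * x + 12) →
          ∀ n : ℕ, 1 ≤ n →
            Polynomial.aeval x (a n) =
              (1 / (2 * q)) * (x ^ 2 + x) *
                ((x ^ 2 + 2 * x + 4 + q) * ((p + q) / 2) ^ (n - 1)
                  - (x ^ 2 + 2 * x + 4 - q) * ((p - q) / 2) ^ (n - 1)) := by
  intro x hpos p q hp hq n hn
  have hqpos : 0 < q := hq ▸ Real.sqrt_pos.mpr hpos
  have hq2 : q ^ 2 = x ^ 4 + 4 * x ^ 3 + 12 * x ^ 2 + 20 * x + 12 := by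
    rw [hq, Real.sq_sqrt hpos.le]
  obtain ⟨m, rfl⟩ : ∃ m, n = m + 1 := ⟨n - 1, (Nat.succ_pred_eq_of_pos hn).symm⟩
  have key := (celtic_key x q ((p + q) / 2) ((p - q) / 2) hq2 (by rw [hp]) (by rw [hp]) m).1
  simp only [Nat.add_sub_cancel]
  have h2q : (2 * q) ≠ 0 := by positivity
  rw [show (1 / (2 * q)) * (x ^ 2 + x) *
      ((x ^ 2 + 2 * x + 4 + q) * ((p + q) / 2) ^ m
        - (x ^ 2 + 2 * x + 4 - q) * ((p - q) / 2) ^ m)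
      = ((x ^ 2 + x) * ((x ^ 2 + 2 * x + 4 + q) * ((p + q) / 2) ^ m
        - (x ^ 2 + 2 * x + 4 - q) * ((p - q) / 2) ^ m)) / (2 * q) from by ring,
    eq_div_iff h2q]
  linear_combination key
end

section
/- For every real x with x⁴ + 4x³ + 12x² + 20x + 12 > 0, setting p = x² + 4x + 4 and q = √(x⁴ + 4x³ + 12x² + 20x + 12), one has for all n ≥ 1: b(n)(x) = (x/(2q))·((x² + 4x + 2 + q)·((p+q)/2)^{n−1} − (x² + 4x + 2 − q)·((p−q)/2)^{n−1}). -/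
open Polynomial

theorem celtic_closed_form_b :
    ∀ x : ℝ, 0 < x ^ 4 + 4 * x ^ 3 + 12 * x ^ 2 + 20 * x + 12 →
      ∀ p q : ℝ, p = x ^ 2 + 4 * x + 4 →
        q = Real.sqrt (x ^ 4 + 4 * x ^ 3 + 12 * x ^ 2 + 20 * x + 12) →
          ∀ n : ℕ, 1 ≤ n →
            Polynomial.aeval x (b n) =
              (x / (2 * q)) *
                ((x ^ 2 + 4 * x + 2 + q) * ((p + q) / 2) ^ (n - 1)
                  - (x ^ 2 + 4 * x + 2 - q) * ((p - q) / 2) ^ (n - 1)) := by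
  intro x hpos p q hp hq n hn
  have hq2 : q ^ 2 = x ^ 4 + 4 * x ^ 3 + 12 * x ^ 2 + 20 * x + 12 := by
    rw [hq]; exact Real.sq_sqrt hpos.le
  have hqpos : 0 < q := by rw [hq]; exact Real.sqrt_pos.mpr hpos
  subst hp
  set P : ℝ := x ^ 2 + 4 * x + 4 with hP
  have key : ∀ m : ℕ,
      2 * q * (Polynomial.aeval x (a (m + 1)) : ℝ) =
        x * (x + 1) * ((x ^ 2 + 2 * x + 4 + q) * ((P + q) / 2) ^ m
          - (x ^ 2 + 2 * x + 4 - q) * ((P - q) / 2) ^ m) ∧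
      2 * q * (Polynomial.aeval x (b (m + 1)) : ℝ) =
        x * ((x ^ 2 + 4 * x + 2 + q) * ((P + q) / 2) ^ m
          - (x ^ 2 + 4 * x + 2 - q) * ((P - q) / 2) ^ m) := by
    intro m
    induction m with
    | zero => simp [a, b, ab]; constructor <;> ring
    | succ m ih =>
      obtain ⟨iha, ihb⟩ := ih
      have ha : (Polynomial.aeval x (a (m + 1 + 1)) : ℝ) =
          (x ^ 2 + 3 * x + 3) * Polynomial.aeval x (a (m + 1))
            + (x + 1) * Polynomial.aeval x (b (m + 1)) := by
        simp only [a, b, ab, map_add, map_mul, map_pow, map_ofNat, map_one, aeval_X]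
      have hb : (Polynomial.aeval x (b (m + 1 + 1)) : ℝ) =
          (x + 2) * Polynomial.aeval x (a (m + 1))
            + (x + 1) * Polynomial.aeval x (b (m + 1)) := by
        simp only [a, b, ab, map_add, map_mul, map_pow, map_ofNat, map_one, aeval_X]
      constructor
      · rw [ha]
        linear_combination (x ^ 2 + 3 * x + 3) * iha + (x + 1) * ihb +
          (x * (x + 1) / 2 * (((P - q) / 2) ^ m - ((P + q) / 2) ^ m)) * hq2
      · rw [hb]
        linear_combination (x + 2) * iha + (x + 1) * ihb +
          (x / 2 * (((P - q) / 2) ^ m - ((P + q) / 2) ^ m)) * hq2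
  obtain ⟨-, hbn⟩ := key (n - 1)
  rw [Nat.sub_add_cancel hn] at hbn
  have h2q : 2 * q ≠ 0 := by positivity
  rw [div_mul_eq_mul_div, eq_div_iff h2q]
  linear_combination hbn
end

section
/- Define vectors Aₙ ∈ (ℤ[x])¹⁴ by A₀ = (1,0,0,0,0,0,0,0,0,0,0,0,0,0)ᵀ and Aₙ = M·Aₙ₋₁, where M is the 14×14 states matrix over ℤ[x] given in the paper (with entries built from s = x+1, t = x+2, u = x²+3x+2, v = x²+3x+3). Define the closure bracket ⟨Ḡₙ⟩ = a₁₁⁽ⁿ⁾x⁴ + (a₂⁽ⁿ⁾+a₄⁽ⁿ⁾+a₉⁽ⁿ⁾+a₁₂⁽ⁿ⁾+a₁₃⁽ⁿ⁾+a₁₄⁽ⁿ⁾)x³ + (a₁⁽ⁿ⁾+a₅⁽ⁿ⁾+a₆⁽ⁿ⁾+a₇⁽ⁿ⁾+a₈⁽ⁿ⁾+a₁₀⁽ⁿ⁾)x² + a₃⁽ⁿ⁾x. Then for all n ≥ 1, ⟨Ḡₙ⟩ = (x+1)²·a(n), where a(n) is defined by the 2-dimensional recursion a(1)=x²+x, b(1)=x,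 a(n)=(x²+3x+3)a(n−1)+(x+1)b(n−1), b(n)=(x+2)a(n−1)+(x+1)b(n−1). -/
open Polynomial

/-- The 14×14 states matrix of the 4-tangle framework, with `s = X+1`, `t = X+2`,
`u = X²+3X+2`, `v = X²+3X+3`. -/
noncomputable def M14 : Matrix (Fin 14) (Fin 14) (Polynomial ℤ) :=
  let s : Polynomial ℤ := X + 1
  let t : Polynomial ℤ := X + 2
  let u : Polynomial ℤ := X ^ 2 + 3 * X + 2
  let v : Polynomial ℤ := X ^ 2 + 3 * X + 3
  !![1, 0, 0, 0, 0, 0, 0, 0, 0, 0, 0, 0, 0, 0;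
     1, t, 0, 0, 0, s, 0, 0, 0, 0, 0, 0, 0, 1;
     1, 0, s, 0, 1, 0, 0, 1, 0, 0, 0, 0, 0, 0;
     1, 0, 0, t, 0, 0, s, 0, 0, 0, 0, 0, 1, 0;
     1, 0, s, 0, t, 0, 0, 1, 0, 0, 0, 0, 0, 0;
     0, 1, 0, 0, 0, s, 0, 0, 0, 0, 0, 0, 0, 1;
     0, 0, 0, 1, 0, 0, s, 0, 0, 0, 0, 0, 1, 0;
     1, 0, s, 0, 1, 0, 0, t, 0, 0, 0, 0, 0, 0;
     1, 0, s, 0, t, 0, 0, t, v, u, 0, 0, 0, 0;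
     0, 0, 0, 0, 0, 0, 0, 0, 1, s, 0, 0, 0, 0;
     1, t, 0, t, 0, s, s, 0, 0, 0, v, u, t, t;
     0, 0, 0, 0, 0, 0, 0, 0, 0, 0, 1, s, 0, 0;
     0, 0, 0, 1, 0, 0, s, 0, 0, 0, 0, 0, t, 0;
     0, 1, 0, 0, 0, s, 0, 0, 0, 0, 0, 0, 0, t]

/-- The bracket vector `Aₙ` of the iterated 4-tangle `Gₙ`. -/
noncomputable def A : ℕ → Fin 14 → Polynomial ℤ
  | 0 => fun i => if i = 0 then 1 else 0
  | n + 1 => M14.mulVec (A n)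

/-- The Kauffman bracket of the closure `Ḡₙ`. -/
noncomputable def Gbar (n : ℕ) : Polynomial ℤ :=
  A n 10 * X ^ 4
    + (A n 1 + A n 3 + A n 8 + A n 11 + A n 12 + A n 13) * X ^ 3
    + (A n 0 + A n 4 + A n 5 + A n 6 + A n 7 + A n 9) * X ^ 2
    + A n 2 * X

lemma sum_univ_fourteen {β : Type*} [AddCommMonoid β] (f : Fin 14 → β) :
    ∑ i, f i = f 0 + f 1 + f 2 + f 3 + f 4 + f 5 + f 6 + f 7 + f 8 + f 9
      + f 10 + f 11 + f 12 + f 13 := by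
  rw [Fin.sum_univ_castSucc, Fin.sum_univ_castSucc, Fin.sum_univ_castSucc,
    Fin.sum_univ_castSucc, Fin.sum_univ_castSucc, Fin.sum_univ_castSucc,
    Fin.sum_univ_eight]
  rfl

lemma mulVec0 (w : Fin 14 → Polynomial ℤ) :
    M14.mulVec w 0 = (1:Polynomial ℤ) * w 0 + (0:Polynomial ℤ) * w 1 + (0:Polynomial ℤ) * w 2 + (0:Polynomial ℤ) * w 3 + (0:Polynomial ℤ) * w 4 + (0:Polynomial ℤ) * w 5 + (0:Polynomial ℤ) * w 6 + (0:Polynomial ℤ) * w 7 + (0:Polynomial ℤ) * w 8 + (0:Polynomial ℤ) * w 9 + (0:Polynomial ℤ) * w 10 + (0:Polynomial ℤ) * w 11 + (0:Polynomial ℤ) * w 12 + (0:Polynomial ℤ) * w 13 := by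
  rw [show M14.mulVec w 0 = ∑ j, M14 0 j * w j from rfl, sum_univ_fourteen]
  rfl

lemma mulVec1 (w : Fin 14 → Polynomial ℤ) :
    M14.mulVec w 1 = (1:Polynomial ℤ) * w 0 + (X+2) * w 1 + (0:Polynomial ℤ) * w 2 + (0:Polynomial ℤ) * w 3 + (0:Polynomial ℤ) * w 4 + (X+1) * w 5 + (0:Polynomial ℤ) * w 6 + (0:Polynomial ℤ) * w 7 + (0:Polynomial ℤ) * w 8 + (0:Polynomial ℤ) * w 9 + (0:Polynomial ℤ) * w 10 + (0:Polynomial ℤ) * w 11 + (0:Polynomial ℤ) * w 12 + (1:Polynomial ℤ) * w 13 := by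
  rw [show M14.mulVec w 1 = ∑ j, M14 1 j * w j from rfl, sum_univ_fourteen]
  rfl

lemma mulVec2 (w : Fin 14 → Polynomial ℤ) :
    M14.mulVec w 2 = (1:Polynomial ℤ) * w 0 + (0:Polynomial ℤ) * w 1 + (X+1) * w 2 + (0:Polynomial ℤ) * w 3 + (1:Polynomial ℤ) * w 4 + (0:Polynomial ℤ) * w 5 + (0:Polynomial ℤ) * w 6 + (1:Polynomial ℤ) * w 7 + (0:Polynomial ℤ) * w 8 + (0:Polynomial ℤ) * w 9 + (0:Polynomial ℤ) * w 10 + (0:Polynomial ℤ) * w 11 + (0:Polynomial ℤ) * w 12 + (0:Polynomial ℤ) * w 13 := by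
  rw [show M14.mulVec w 2 = ∑ j, M14 2 j * w j from rfl, sum_univ_fourteen]
  rfl

lemma mulVec3 (w : Fin 14 → Polynomial ℤ) :
    M14.mulVec w 3 = (1:Polynomial ℤ) * w 0 + (0:Polynomial ℤ) * w 1 + (0:Polynomial ℤ) * w 2 + (X+2) * w 3 + (0:Polynomial ℤ) * w 4 + (0:Polynomial ℤ) * w 5 + (X+1) * w 6 + (0:Polynomial ℤ) * w 7 + (0:Polynomial ℤ) * w 8 + (0:Polynomial ℤ) * w 9 + (0:Polynomial ℤ) * w 10 + (0:Polynomial ℤ) * w 11 + (1:Polynomial ℤ) * w 12 + (0:Polynomial ℤ) * w 13 := by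
  rw [show M14.mulVec w 3 = ∑ j, M14 3 j * w j from rfl, sum_univ_fourteen]
  rfl

lemma mulVec4 (w : Fin 14 → Polynomial ℤ) :
    M14.mulVec w 4 = (1:Polynomial ℤ) * w 0 + (0:Polynomial ℤ) * w 1 + (X+1) * w 2 + (0:Polynomial ℤ) * w 3 + (X+2) * w 4 + (0:Polynomial ℤ) * w 5 + (0:Polynomial ℤ) * w 6 + (1:Polynomial ℤ) * w 7 + (0:Polynomial ℤ) * w 8 + (0:Polynomial ℤ) * w 9 + (0:Polynomial ℤ) * w 10 + (0:Polynomial ℤ) * w 11 + (0:Polynomial ℤ) * w 12 + (0:Polynomial ℤ) * w 13 := by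
  rw [show M14.mulVec w 4 = ∑ j, M14 4 j * w j from rfl, sum_univ_fourteen]
  rfl

lemma mulVec5 (w : Fin 14 → Polynomial ℤ) :
    M14.mulVec w 5 = (0:Polynomial ℤ) * w 0 + (1:Polynomial ℤ) * w 1 + (0:Polynomial ℤ) * w 2 + (0:Polynomial ℤ) * w 3 + (0:Polynomial ℤ) * w 4 + (X+1) * w 5 + (0:Polynomial ℤ) * w 6 + (0:Polynomial ℤ) * w 7 + (0:Polynomial ℤ) * w 8 + (0:Polynomial ℤ) * w 9 + (0:Polynomial ℤ) * w 10 + (0:Polynomial ℤ) * w 11 + (0:Polynomial ℤ) * w 12 + (1:Polynomial ℤ) * w 13 := by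
  rw [show M14.mulVec w 5 = ∑ j, M14 5 j * w j from rfl, sum_univ_fourteen]
  rfl

lemma mulVec6 (w : Fin 14 → Polynomial ℤ) :
    M14.mulVec w 6 = (0:Polynomial ℤ) * w 0 + (0:Polynomial ℤ) * w 1 + (0:Polynomial ℤ) * w 2 + (1:Polynomial ℤ) * w 3 + (0:Polynomial ℤ) * w 4 + (0:Polynomial ℤ) * w 5 + (X+1) * w 6 + (0:Polynomial ℤ) * w 7 + (0:Polynomial ℤ) * w 8 + (0:Polynomial ℤ) * w 9 + (0:Polynomial ℤ) * w 10 + (0:Polynomial ℤ) * w 11 + (1:Polynomial ℤ) * w 12 + (0:Polynomial ℤ) * w 13 := by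
  rw [show M14.mulVec w 6 = ∑ j, M14 6 j * w j from rfl, sum_univ_fourteen]
  rfl

lemma mulVec7 (w : Fin 14 → Polynomial ℤ) :
    M14.mulVec w 7 = (1:Polynomial ℤ) * w 0 + (0:Polynomial ℤ) * w 1 + (X+1) * w 2 + (0:Polynomial ℤ) * w 3 + (1:Polynomial ℤ) * w 4 + (0:Polynomial ℤ) * w 5 + (0:Polynomial ℤ) * w 6 + (X+2) * w 7 + (0:Polynomial ℤ) * w 8 + (0:Polynomial ℤ) * w 9 + (0:Polynomial ℤ) * w 10 + (0:Polynomial ℤ) * w 11 + (0:Polynomial ℤ) * w 12 + (0:Polynomial ℤ) * w 13 := by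
  rw [show M14.mulVec w 7 = ∑ j, M14 7 j * w j from rfl, sum_univ_fourteen]
  rfl

lemma mulVec8 (w : Fin 14 → Polynomial ℤ) :
    M14.mulVec w 8 = (1:Polynomial ℤ) * w 0 + (0:Polynomial ℤ) * w 1 + (X+1) * w 2 + (0:Polynomial ℤ) * w 3 + (X+2) * w 4 + (0:Polynomial ℤ) * w 5 + (0:Polynomial ℤ) * w 6 + (X+2) * w 7 + (X^2+3*X+3) * w 8 + (X^2+3*X+2) * w 9 + (0:Polynomial ℤ) * w 10 + (0:Polynomial ℤ) * w 11 + (0:Polynomial ℤ) * w 12 + (0:Polynomial ℤ) * w 13 := by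
  rw [show M14.mulVec w 8 = ∑ j, M14 8 j * w j from rfl, sum_univ_fourteen]
  rfl

lemma mulVec9 (w : Fin 14 → Polynomial ℤ) :
    M14.mulVec w 9 = (0:Polynomial ℤ) * w 0 + (0:Polynomial ℤ) * w 1 + (0:Polynomial ℤ) * w 2 + (0:Polynomial ℤ) * w 3 + (0:Polynomial ℤ) * w 4 + (0:Polynomial ℤ) * w 5 + (0:Polynomial ℤ) * w 6 + (0:Polynomial ℤ) * w 7 + (1:Polynomial ℤ) * w 8 + (X+1) * w 9 + (0:Polynomial ℤ) * w 10 + (0:Polynomial ℤ) * w 11 + (0:Polynomial ℤ) * w 12 + (0:Polynomial ℤ) * w 13 := by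
  rw [show M14.mulVec w 9 = ∑ j, M14 9 j * w j from rfl, sum_univ_fourteen]
  rfl

lemma mulVec10 (w : Fin 14 → Polynomial ℤ) :
    M14.mulVec w 10 = (1:Polynomial ℤ) * w 0 + (X+2) * w 1 + (0:Polynomial ℤ) * w 2 + (X+2) * w 3 + (0:Polynomial ℤ) * w 4 + (X+1) * w 5 + (X+1) * w 6 + (0:Polynomial ℤ) * w 7 + (0:Polynomial ℤ) * w 8 + (0:Polynomial ℤ) * w 9 + (X^2+3*X+3) * w 10 + (X^2+3*X+2) * w 11 + (X+2) * w 12 + (X+2) * w 13 := by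
  rw [show M14.mulVec w 10 = ∑ j, M14 10 j * w j from rfl, sum_univ_fourteen]
  rfl

lemma mulVec11 (w : Fin 14 → Polynomial ℤ) :
    M14.mulVec w 11 = (0:Polynomial ℤ) * w 0 + (0:Polynomial ℤ) * w 1 + (0:Polynomial ℤ) * w 2 + (0:Polynomial ℤ) * w 3 + (0:Polynomial ℤ) * w 4 + (0:Polynomial ℤ) * w 5 + (0:Polynomial ℤ) * w 6 + (0:Polynomial ℤ) * w 7 + (0:Polynomial ℤ) * w 8 + (0:Polynomial ℤ) * w 9 + (1:Polynomial ℤ) * w 10 + (X+1) * w 11 + (0:Polynomial ℤ) * w 12 + (0:Polynomial ℤ) * w 13 := by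
  rw [show M14.mulVec w 11 = ∑ j, M14 11 j * w j from rfl, sum_univ_fourteen]
  rfl

lemma mulVec12 (w : Fin 14 → Polynomial ℤ) :
    M14.mulVec w 12 = (0:Polynomial ℤ) * w 0 + (0:Polynomial ℤ) * w 1 + (0:Polynomial ℤ) * w 2 + (1:Polynomial ℤ) * w 3 + (0:Polynomial ℤ) * w 4 + (0:Polynomial ℤ) * w 5 + (X+1) * w 6 + (0:Polynomial ℤ) * w 7 + (0:Polynomial ℤ) * w 8 + (0:Polynomial ℤ) * w 9 + (0:Polynomial ℤ) * w 10 + (0:Polynomial ℤ) * w 11 + (X+2) * w 12 + (0:Polynomial ℤ) * w 13 := by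
  rw [show M14.mulVec w 12 = ∑ j, M14 12 j * w j from rfl, sum_univ_fourteen]
  rfl

lemma mulVec13 (w : Fin 14 → Polynomial ℤ) :
    M14.mulVec w 13 = (0:Polynomial ℤ) * w 0 + (1:Polynomial ℤ) * w 1 + (0:Polynomial ℤ) * w 2 + (0:Polynomial ℤ) * w 3 + (0:Polynomial ℤ) * w 4 + (X+1) * w 5 + (0:Polynomial ℤ) * w 6 + (0:Polynomial ℤ) * w 7 + (0:Polynomial ℤ) * w 8 + (0:Polynomial ℤ) * w 9 + (0:Polynomial ℤ) * w 10 + (0:Polynomial ℤ) * w 11 + (0:Polynomial ℤ) * w 12 + (X+2) * w 13 := by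
  rw [show M14.mulVec w 13 = ∑ j, M14 13 j * w j from rfl, sum_univ_fourteen]
  rfl

lemma key (w : Fin 14 → Polynomial ℤ) :
    (M14.mulVec (M14.mulVec w)) 10 * X ^ 4 + ((M14.mulVec (M14.mulVec w)) 1 + (M14.mulVec (M14.mulVec w)) 3 + (M14.mulVec (M14.mulVec w)) 8 + (M14.mulVec (M14.mulVec w)) 11 + (M14.mulVec (M14.mulVec w)) 12 + (M14.mulVec (M14.mulVec w)) 13) * X ^ 3 + ((M14.mulVec (M14.mulVec w)) 0 + (M14.mulVec (M14.mulVec w)) 4 + (M14.mulVec (M14.mulVec w)) 5 + (M14.mulVec (M14.mulVec w)) 6 + (M14.mulVec (M14.mulVec w)) 7 + (M14.mulVec (M14.mulVec w)) 9) * X ^ 2 + (M14.mulVec (M14.mulVec w)) 2 * X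
    = (X + 2) ^ 2 * ((M14.mulVec w) 10 * X ^ 4 + ((M14.mulVec w) 1 + (M14.mulVec w) 3 + (M14.mulVec w) 8 + (M14.mulVec w) 11 + (M14.mulVec w) 12 + (M14.mulVec w) 13) * X ^ 3 + ((M14.mulVec w) 0 + (M14.mulVec w) 4 + (M14.mulVec w) 5 + (M14.mulVec w) 6 + (M14.mulVec w) 7 + (M14.mulVec w) 9) * X ^ 2 + (M14.mulVec w) 2 * X)
      - (X + 1) ^ 3 * (w 10 * X ^ 4 + (w 1 + w 3 + w 8 + w 11 + w 12 + w 13) * X ^ 3 + (w 0 + w 4 + w 5 + w 6 + w 7 + w 9) * X ^ 2 + w 2 * X) := by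
  simp only [mulVec0, mulVec1, mulVec2, mulVec3, mulVec4, mulVec5, mulVec6, mulVec7, mulVec8, mulVec9, mulVec10, mulVec11, mulVec12, mulVec13]
  ring

lemma Gbar_rec (n : ℕ) :
    Gbar (n + 2) = (X + 2) ^ 2 * Gbar (n + 1) - (X + 1) ^ 3 * Gbar n := by
  simp only [Gbar]
  rw [show A (n + 2) = M14.mulVec (M14.mulVec (A n)) from rfl,
      show A (n + 1) = M14.mulVec (A n) from rfl]
  exact key (A n)

lemma a_rec (m : ℕ) :
    a (m + 3) = (X + 2) ^ 2 * a (m + 2) - (X + 1) ^ 3 * a (m + 1) := by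
  simp only [a]
  rw [show ab (m + 3) = ((X ^ 2 + 3 * X + 3) * (ab (m + 2)).1 + (X + 1) * (ab (m + 2)).2,
        (X + 2) * (ab (m + 2)).1 + (X + 1) * (ab (m + 2)).2) from rfl,
      show ab (m + 2) = ((X ^ 2 + 3 * X + 3) * (ab (m + 1)).1 + (X + 1) * (ab (m + 1)).2,
        (X + 2) * (ab (m + 1)).1 + (X + 1) * (ab (m + 1)).2) from rfl]
  ring

lemma base1 : Gbar 1 = (X + 1) ^ 2 * a 1 := by
  simp only [Gbar]
  rw [show A 1 = M14.mulVec (A 0) from rfl]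
  simp only [mulVec0, mulVec1, mulVec2, mulVec3, mulVec4, mulVec5, mulVec6, mulVec7, mulVec8, mulVec9, mulVec10, mulVec11, mulVec12, mulVec13]
  rw [show A 0 0 = 1 from rfl, show A 0 1 = 0 from rfl, show A 0 2 = 0 from rfl, show A 0 3 = 0 from rfl, show A 0 4 = 0 from rfl, show A 0 5 = 0 from rfl, show A 0 6 = 0 from rfl, show A 0 7 = 0 from rfl, show A 0 8 = 0 from rfl, show A 0 9 = 0 from rfl, show A 0 10 = 0 from rfl, show A 0 11 = 0 from rfl, show A 0 12 = 0 from rfl, show A 0 13 = 0 from rfl, show a 1 = X ^ 2 + X from rfl]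
  ring

lemma base2 : Gbar 2 = (X + 1) ^ 2 * a 2 := by
  simp only [Gbar]
  rw [show A 2 = M14.mulVec (M14.mulVec (A 0)) from rfl]
  simp only [mulVec0, mulVec1, mulVec2, mulVec3, mulVec4, mulVec5, mulVec6, mulVec7, mulVec8, mulVec9, mulVec10, mulVec11, mulVec12, mulVec13]
  rw [show A 0 0 = 1 from rfl, show A 0 1 = 0 from rfl, show A 0 2 = 0 from rfl, show A 0 3 = 0 from rfl, show A 0 4 = 0 from rfl, show A 0 5 = 0 from rfl, show A 0 6 = 0 from rfl, show A 0 7 = 0 from rfl, show A 0 8 = 0 from rfl, show A 0 9 = 0 from rfl, show A 0 10 = 0 from rfl, show A 0 11 = 0 from rfl, show A 0 12 = 0 from rfl, show A 0 13 = 0 from rfl,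
    show a 2 = (X ^ 2 + 3 * X + 3) * (X ^ 2 + X) + (X + 1) * X from rfl]
  ring

theorem celtic_tangle_closure :
    ∀ n : ℕ, 1 ≤ n → Gbar n = (X + 1) ^ 2 * a n := by
  have hkey : ∀ n : ℕ, Gbar (n + 1) = (X + 1) ^ 2 * a (n + 1) ∧
      Gbar (n + 2) = (X + 1) ^ 2 * a (n + 2) := by
    intro n
    induction n with
    | zero => exact ⟨base1, base2⟩
    | succ m ih =>
      refine ⟨ih.2, ?_⟩
      rw [show m + 1 + 2 = m + 3 from rfl, Gbar_rec, a_rec, ih.1, ih.2]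
      ring
  intro n hn
  obtain ⟨m, rfl⟩ : ∃ m, n = m + 1 := ⟨n - 1, by omega⟩
  exact (hkey m).1
end
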